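/- Let m(j) denote the multiplicity (1/8)·Σ_{t=1}^{8} χ^j(w_l^t)·χ^j(w_r^t) of the trivial representation of the cyclic group C₈ = ⟨(w_l, w_r)⟩ in D^{(j,j)}, where w_l = diag(-ā, -a), w_r = [[0,-a³],[-a,0]], a = e^{iπ/4}. Then m(j) = 0 for all half-odd-integer j, and for integer j the recursion m(j+4) = m(j) + 8j + 20 + 2(-1)^j holds. -/
import Mathlib


open Complex Real

/-- The character of the spin-`j` irreducible representation of `SU(2)` at an
element of rotation angle `φ`, parametrized by `n = 2j`. -/
noncomputable def chi (n : ℕ) (φ : ℝ) : ℂ :=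
  ∑ k ∈ Finset.range (n + 1), Complex.exp (Complex.I * ((k : ℂ) - (n : ℂ) / 2) * φ)

/-- The multiplicity of the trivial representation of the cyclic group
`C₈ = ⟨(w_l, w_r)⟩` in `D^{(j,j)}`, `n = 2j`:
`m = (1/8)·Σ_{t=1}^{8} χ^j(w_l^t)·χ^j(w_r^t)`, where `w_l = diag(-ā,-a)` has
rotation angle `3π/2` and `w_r = [[0,-a³],[-a,0]]` has rotation angle `π`
(`a = e^{iπ/4}`), so `w_l^t, w_r^t` have angles `3πt/2` and `πt`. -/
noncomputable def mC8 (n : ℕ) : ℂ :=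
  (1 / 8) * ∑ t ∈ Finset.Icc (1 : ℕ) 8, chi n (3 * π * t / 2) * chi n (π * t)


lemma exp_half_pi : Complex.exp ((π:ℂ)/2 * I) = I := by
  rw [Complex.exp_mul_I]
  norm_num [← Complex.ofReal_cos, ← Complex.ofReal_sin, Real.cos_pi_div_two, Real.sin_pi_div_two]

lemma exp_pos_half (m : ℕ) : Complex.exp (m * ((π:ℂ)/2 * I)) = I ^ m := by
  rw [Complex.exp_nat_mul, exp_half_pi]

lemma exp_neg_half (m : ℕ) : Complex.exp (-(m * ((π:ℂ)/2 * I))) = (-I) ^ m := by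
  rw [Complex.exp_neg, exp_pos_half, ← Complex.inv_I, inv_pow]

lemma chi_rev (n : ℕ) (φ : ℝ) :
    chi n φ = Complex.exp (I * n * φ / 2) *
      ∑ k ∈ Finset.range (n + 1), Complex.exp (-(I * φ)) ^ k := by
  rw [chi, ← Finset.sum_range_reflect, Finset.mul_sum]
  refine Finset.sum_congr rfl fun k hk => ?_
  rw [Finset.mem_range] at hk
  have hk' : k ≤ n := by omega
  rw [← Complex.exp_nat_mul, ← Complex.exp_add]
  congr 1
  have : ((n + 1 - 1 - k : ℕ) : ℂ) = (n : ℂ) - k := by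
    push_cast [Nat.cast_sub hk']
    ring
  rw [this]; ring

lemma chiL_even (j t : ℕ) :
    chi (2 * j) (3 * π * t / 2) =
      ((I:ℂ) ^ (3 * t)) ^ j * ∑ k ∈ Finset.range (2 * j + 1), (((-I):ℂ) ^ (3 * t)) ^ k := by
  rw [chi_rev]
  congr 1
  · rw [show (I * ((2 * j : ℕ) : ℂ) * ((3 * π * t / 2 : ℝ) : ℂ) / 2)
        = ((3 * t * j : ℕ) : ℂ) * ((π:ℂ)/2 * I) by push_cast; ring,
      exp_pos_half, pow_mul]
  · refine Finset.sum_congr rfl fun k _ => ?_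
    rw [show (-(I * ((3 * π * t / 2 : ℝ) : ℂ)))
        = -(((3 * t : ℕ) : ℂ) * ((π:ℂ)/2 * I)) by push_cast; ring,
      exp_neg_half]

lemma chiR_even (j t : ℕ) :
    chi (2 * j) (π * t) =
      (((-1):ℂ) ^ t) ^ j * ∑ k ∈ Finset.range (2 * j + 1), (((-1):ℂ) ^ t) ^ k := by
  rw [chi_rev]
  congr 1
  · rw [show (I * ((2 * j : ℕ) : ℂ) * ((π * t : ℝ) : ℂ) / 2)
        = ((2 * t * j : ℕ) : ℂ) * ((π:ℂ)/2 * I) by push_cast; ring,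
      exp_pos_half, pow_mul]
    norm_num [pow_mul]
  · refine Finset.sum_congr rfl fun k _ => ?_
    rw [show (-(I * ((π * t : ℝ) : ℂ)))
        = -(((2 * t : ℕ) : ℂ) * ((π:ℂ)/2 * I)) by push_cast; ring,
      exp_neg_half]
    norm_num [pow_mul]

lemma sum_one (j : ℕ) : ∑ k ∈ Finset.range (2 * j + 1), ((1:ℂ)) ^ k = 2 * j + 1 := by
  simp [Finset.sum_const]

lemma sum_neg_one (j : ℕ) : ∑ k ∈ Finset.range (2 * j + 1), ((-1:ℂ)) ^ k = 1 := by
  rw [neg_one_geom_sum]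
  simp [Nat.even_add_one, Nat.even_mul]

lemma sum_I (j : ℕ) : ∑ k ∈ Finset.range (2 * j + 1), (I:ℂ) ^ k
    = (I * (-1) ^ j - 1) / (I - 1) := by
  rw [geom_sum_eq (by simp [Complex.ext_iff]) (2 * j + 1)]
  congr 2
  rw [pow_succ, pow_mul, Complex.I_sq]
  ring

lemma sum_neg_I (j : ℕ) : ∑ k ∈ Finset.range (2 * j + 1), ((-I):ℂ) ^ k
    = (-I * (-1) ^ j - 1) / (-I - 1) := by
  rw [geom_sum_eq (by simp [Complex.ext_iff]) (2 * j + 1)]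
  congr 2
  rw [pow_succ, pow_mul]
  norm_num [Complex.I_sq]
  ring

lemma mC8_even (j : ℕ) : mC8 (2 * j) =
    (1 / 8) * (2 * (2 * (j:ℂ) + 1) ^ 2 + 2 * (-1) ^ j * (2 * (j:ℂ) + 1)
      + 2 * (-1) ^ j * ((-I) ^ j * ((I * (-1) ^ j - 1) / (I - 1))
        + I ^ j * ((-I * (-1) ^ j - 1) / (-I - 1)))) := by
  rw [mC8, show (Finset.Icc (1:ℕ) 8) = {1,2,3,4,5,6,7,8} from by decide]
  rw [Finset.sum_insert (by decide), Finset.sum_insert (by decide),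
    Finset.sum_insert (by decide), Finset.sum_insert (by decide),
    Finset.sum_insert (by decide), Finset.sum_insert (by decide),
    Finset.sum_insert (by decide), Finset.sum_singleton]
  simp only [chiL_even, chiR_even]
  norm_num [pow_succ]
  rw [sum_I, sum_neg_I]
  ring

lemma chiR_gen (n t : ℕ) : chi n (π * t) =
    ((I:ℂ) ^ t) ^ n * ∑ k ∈ Finset.range (n + 1), (((-1):ℂ) ^ t) ^ k := by
  rw [chi_rev]
  congr 1
  · rw [show (I * (n:ℂ) * ((π * t : ℝ) : ℂ) / 2) = ((t * n : ℕ) : ℂ) * ((π:ℂ)/2 * I)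
      by push_cast; ring, exp_pos_half, pow_mul]
  · refine Finset.sum_congr rfl fun k _ => ?_
    rw [show (-(I * ((π * t : ℝ) : ℂ))) = -(((2 * t : ℕ) : ℂ) * ((π:ℂ)/2 * I))
      by push_cast; ring, exp_neg_half]
    norm_num [pow_mul]

lemma chiL_gen2 (n t s : ℕ) (hts : t = 2 * s) : chi n (3 * π * t / 2) =
    ((I:ℂ) ^ (3 * s)) ^ n * ∑ k ∈ Finset.range (n + 1), (((-1):ℂ) ^ s) ^ k := by
  subst hts
  rw [chi_rev]
  congr 1
  · rw [show (I * (n:ℂ) * ((3 * π * ((2 * s : ℕ) : ℝ) / 2 : ℝ) : ℂ) / 2)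
        = ((3 * s * n : ℕ) : ℂ) * ((π:ℂ)/2 * I) by push_cast; ring,
      exp_pos_half, pow_mul]
  · refine Finset.sum_congr rfl fun k _ => ?_
    rw [show (-(I * ((3 * π * ((2 * s : ℕ) : ℝ) / 2 : ℝ) : ℂ)))
        = -(((6 * s : ℕ) : ℂ) * ((π:ℂ)/2 * I)) by push_cast; ring,
      exp_neg_half, show 6 * s = 2 * (3 * s) from by ring, pow_mul]
    norm_num [neg_sq, Complex.I_sq, pow_mul]


/-- The multiplicity of the trivial `C₈`-representation in `D^{(j,j)}` vanishes
for half-odd-integer `j`, and for integer `j` satisfies the recursion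
`m(j+4) = m(j) + 8j + 20 + 2(-1)^j`. -/
theorem multiplicity_trivial_C8_recursion :
    (∀ n : ℕ, Odd n → mC8 n = 0) ∧
    (∀ j : ℕ, mC8 (2 * (j + 4)) = mC8 (2 * j) + 8 * (j : ℂ) + 20 + 2 * (-1 : ℂ) ^ j) := by
  constructor
  · intro n hn
    have hE : Even (n + 1) := hn.add_one
    rw [mC8, show (Finset.Icc (1:ℕ) 8) = {1,2,3,4,5,6,7,8} from by decide]
    rw [Finset.sum_insert (by decide), Finset.sum_insert (by decide),
      Finset.sum_insert (by decide), Finset.sum_insert (by decide),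
      Finset.sum_insert (by decide), Finset.sum_insert (by decide),
      Finset.sum_insert (by decide), Finset.sum_singleton]
    rw [chiL_gen2 n 2 1 (by norm_num), chiL_gen2 n 4 2 (by norm_num),
      chiL_gen2 n 6 3 (by norm_num), chiL_gen2 n 8 4 (by norm_num)]
    simp only [chiR_gen]
    norm_num [pow_succ, neg_one_geom_sum, hE, hn.neg_one_pow]
    ring
  · intro j
    have h4 : (I:ℂ) ^ 4 = 1 := by norm_num [pow_succ]
    have h4' : ((-I):ℂ) ^ 4 = 1 := by norm_num [pow_succ]
    rw [mC8_even, mC8_even]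
    push_cast
    simp only [pow_add, h4, h4', mul_one]
    norm_num
    ring
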